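/- arXiv:2310.08505 — 8 statements merged into one kernel-verified Lean document; each statement's English description precedes it below -/
import Mathlib

section
/- Let x(u,v) = α(u) + β(v) with α, β smooth curves in ℝ³, and let ẋ(u,v) = α(u) ∧ β(v) + ∫₀ᵘ α ∧ α' − ∫₀ᵛ β ∧ β'. Then ẋ is an infinitesimal isometry of x, i.e., ⟨ẋ_u, x_u⟩ = 0, ⟨ẋ_v, x_v⟩ = 0, and ⟨ẋ_u, x_v⟩ + ⟨ẋ_v, x_u⟩ = 0 everywhere. -/
open Matrix

lemma hasDerivAt_cross {f g : ℝ → Fin 3 → ℝ} {f' g' : Fin 3 → ℝ} {t : ℝ}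
    (hf : HasDerivAt f f' t) (hg : HasDerivAt g g' t) :
    HasDerivAt (fun s => f s ⨯₃ g s) (f' ⨯₃ g t + f t ⨯₃ g') t := by
  have hfi := hasDerivAt_pi.1 hf
  have hgi := hasDerivAt_pi.1 hg
  rw [hasDerivAt_pi]
  intro i
  fin_cases i
  · convert ((hfi 1).mul (hgi 2)).sub ((hfi 2).mul (hgi 1)) using 1
    · ext s; simp [cross_apply]
    · simp [cross_apply]; ring
  · convert ((hfi 2).mul (hgi 0)).sub ((hfi 0).mul (hgi 2)) using 1
    · ext s; simp [cross_apply]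
    · simp [cross_apply]; ring
  · convert ((hfi 0).mul (hgi 1)).sub ((hfi 1).mul (hgi 0)) using 1
    · ext s; simp [cross_apply]
    · simp [cross_apply]; ring

lemma cross_continuous {f g : ℝ → Fin 3 → ℝ} (hf : Continuous f) (hg : Continuous g) :
    Continuous (fun s => f s ⨯₃ g s) := by
  apply continuous_pi
  intro i
  fin_cases i <;>
  · simp only [cross_apply]
    simp
    fun_prop

/-- The universal field `ẋ` is an infinitesimal isometry of the surface of
translation `x(u,v) = α(u) + β(v)`. -/
theorem universal_bending_is_infinitesimal_isometry
    (α β : ℝ → Fin 3 → ℝ) (hα : ContDiff ℝ (⊤ : ℕ∞) α) (hβ : ContDiff ℝ (⊤ : ℕ∞) β)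
    (x xdot : ℝ → ℝ → Fin 3 → ℝ)
    (hx : ∀ u v, x u v = α u + β v)
    (hxdot : ∀ u v, xdot u v =
      α u ⨯₃ β v + (∫ s in (0:ℝ)..u, α s ⨯₃ deriv α s)
        - ∫ s in (0:ℝ)..v, β s ⨯₃ deriv β s) :
    ∀ u v : ℝ,
      (deriv (fun u' => xdot u' v) u) ⬝ᵥ (deriv (fun u' => x u' v) u) = 0 ∧
      (deriv (fun v' => xdot u v') v) ⬝ᵥ (deriv (fun v' => x u v') v) = 0 ∧
      (deriv (fun u' => xdot u' v) u) ⬝ᵥ (deriv (fun v' => x u v') v)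
        + (deriv (fun v' => xdot u v') v) ⬝ᵥ (deriv (fun u' => x u' v) u) = 0 := by
  intro u v
  have hαd : ∀ t, HasDerivAt α (deriv α t) t := fun t =>
    (hα.differentiable (by simp) t).hasDerivAt
  have hβd : ∀ t, HasDerivAt β (deriv β t) t := fun t =>
    (hβ.differentiable (by simp) t).hasDerivAt
  have hαc : Continuous (fun s => α s ⨯₃ deriv α s) :=
    cross_continuous hα.continuous (hα.continuous_deriv (by simp))
  have hβc : Continuous (fun s => β s ⨯₃ deriv β s) :=
    cross_continuous hβ.continuous (hβ.continuous_deriv (by simp))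
  -- derivative of x in u
  have hxu : HasDerivAt (fun u' => x u' v) (deriv α u) u := by
    have : HasDerivAt (fun u' => α u' + β v) (deriv α u) u := (hαd u).add_const _
    exact this.congr_of_eventuallyEq (Filter.Eventually.of_forall fun u' => hx u' v)
  have hxv : HasDerivAt (fun v' => x u v') (deriv β v) v := by
    have : HasDerivAt (fun v' => α u + β v') (deriv β v) v :=
      (hβd v).const_add _
    exact this.congr_of_eventuallyEq (Filter.Eventually.of_forall fun v' => hx u v')
  -- derivative of xdot in u
  have hIu : HasDerivAt (fun u' => ∫ s in (0:ℝ)..u', α s ⨯₃ deriv α s)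
      (α u ⨯₃ deriv α u) u :=
    intervalIntegral.integral_hasDerivAt_right (hαc.intervalIntegrable _ _)
      (hαc.stronglyMeasurableAtFilter _ _) hαc.continuousAt
  have hIv : HasDerivAt (fun v' => ∫ s in (0:ℝ)..v', β s ⨯₃ deriv β s)
      (β v ⨯₃ deriv β v) v :=
    intervalIntegral.integral_hasDerivAt_right (hβc.intervalIntegrable _ _)
      (hβc.stronglyMeasurableAtFilter _ _) hβc.continuousAt
  have hcu : HasDerivAt (fun u' => α u' ⨯₃ β v)
      (deriv α u ⨯₃ β v + α u ⨯₃ (0 : Fin 3 → ℝ)) u :=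
    hasDerivAt_cross (hαd u) (hasDerivAt_const u (β v))
  have hcv : HasDerivAt (fun v' => α u ⨯₃ β v')
      ((0 : Fin 3 → ℝ) ⨯₃ β v + α u ⨯₃ deriv β v) v :=
    hasDerivAt_cross (hasDerivAt_const v (α u)) (hβd v)
  have hxdu : HasDerivAt (fun u' => xdot u' v)
      (deriv α u ⨯₃ β v + α u ⨯₃ (0 : Fin 3 → ℝ) + α u ⨯₃ deriv α u) u := by
    have : HasDerivAt (fun u' => α u' ⨯₃ β v + (∫ s in (0:ℝ)..u', α s ⨯₃ deriv α s)
        - ∫ s in (0:ℝ)..v, β s ⨯₃ deriv β s)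
        (deriv α u ⨯₃ β v + α u ⨯₃ (0 : Fin 3 → ℝ) + α u ⨯₃ deriv α u) u :=
      (hcu.add hIu).sub_const _
    exact this.congr_of_eventuallyEq
      (Filter.Eventually.of_forall fun u' => hxdot u' v)
  have hxdv : HasDerivAt (fun v' => xdot u v')
      ((0 : Fin 3 → ℝ) ⨯₃ β v + α u ⨯₃ deriv β v - β v ⨯₃ deriv β v) v := by
    have : HasDerivAt (fun v' => α u ⨯₃ β v' + (∫ s in (0:ℝ)..u, α s ⨯₃ deriv α s)
        - ∫ s in (0:ℝ)..v', β s ⨯₃ deriv β s)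
        ((0 : Fin 3 → ℝ) ⨯₃ β v + α u ⨯₃ deriv β v - β v ⨯₃ deriv β v) v :=
      (hcv.add_const _).sub hIv
    exact this.congr_of_eventuallyEq
      (Filter.Eventually.of_forall fun v' => hxdot u v')
  rw [hxu.deriv, hxv.deriv, hxdu.deriv, hxdv.deriv]
  refine ⟨?_, ?_, ?_⟩ <;>
  · simp only [cross_apply, dotProduct, Fin.sum_univ_three, Pi.add_apply, Pi.sub_apply,
      Pi.zero_apply, Matrix.cons_val_zero, Matrix.cons_val_one, Matrix.head_cons,
      Matrix.cons_val_two, Matrix.tail_cons]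
    ring
end

section
/- Let α, β : ℝ → ℝ³ be smooth curves with α'(u) ∧ β'(v) ≠ 0 for some (u,v), and let ẋ(u,v) = α(u) ∧ β(v) + ∫₀ᵘ α ∧ α' − ∫₀ᵛ β ∧ β'. Then ẋ is not a Euclidean velocity of x(u,v) = α(u) + β(v); that is, there exist no constant vectors v₀, w₀ ∈ ℝ³ with ẋ(u,v) = v₀ + w₀ ∧ x(u,v) for all (u,v). -/
open Matrix

/-- If `L ∘ γ` is constant for a continuous linear map `L` and differentiable `γ`,
then `L (deriv γ u) = 0`. -/
lemma clm_comp_const_deriv (γ : ℝ → Fin 3 → ℝ) (hγ : Differentiable ℝ γ)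
    (L : (Fin 3 → ℝ) →L[ℝ] (Fin 3 → ℝ))
    (hconst : ∀ u₁ u₂ : ℝ, L (γ u₁) = L (γ u₂)) (u : ℝ) :
    L (deriv γ u) = 0 := by
  have h1 : HasDerivAt (fun t => L (γ t)) (L (deriv γ u)) u :=
    L.hasFDerivAt.comp_hasDerivAt u (hγ u).hasDerivAt
  have heq : (fun t => L (γ t)) = fun _ => L (γ 0) := funext fun t => hconst t 0
  rw [heq] at h1
  exact h1.unique (hasDerivAt_const u _)

/-- If `α' ×₃ β' ≠ 0` somewhere, the universal field `ẋ` is not a Euclidean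
velocity of `x = α + β`. -/
theorem universal_bending_not_euclidean_velocity
    (α β : ℝ → Fin 3 → ℝ) (hα : ContDiff ℝ (⊤ : ℕ∞) α) (hβ : ContDiff ℝ (⊤ : ℕ∞) β)
    (hne : ∃ u v : ℝ, deriv α u ⨯₃ deriv β v ≠ 0)
    (xdot : ℝ → ℝ → Fin 3 → ℝ)
    (hxdot : ∀ u v, xdot u v =
      α u ⨯₃ β v + (∫ s in (0:ℝ)..u, α s ⨯₃ deriv α s)
        - ∫ s in (0:ℝ)..v, β s ⨯₃ deriv β s) :
    ¬ ∃ v₀ w₀ : Fin 3 → ℝ, ∀ u v : ℝ,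
        xdot u v = v₀ + w₀ ⨯₃ (α u + β v) := by
  rintro ⟨v₀, w₀, hEq⟩
  obtain ⟨u₀, v₁', hne⟩ := hne
  have hdα : Differentiable ℝ α := hα.differentiable (by simp)
  have hdβ : Differentiable ℝ β := hβ.differentiable (by simp)
  -- split identity : α u ×₃ β v = (stuff in u) + (stuff in v)
  have hsplit : ∀ u v : ℝ, α u ⨯₃ β v =
      (v₀ + w₀ ⨯₃ α u - (∫ s in (0:ℝ)..u, α s ⨯₃ deriv α s))
        + (w₀ ⨯₃ β v + ∫ s in (0:ℝ)..v, β s ⨯₃ deriv β s) := by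
    intro u v
    have h := (hxdot u v).symm.trans (hEq u v)
    have hw : w₀ ⨯₃ (α u + β v) = w₀ ⨯₃ α u + w₀ ⨯₃ β v := map_add _ _ _
    rw [hw] at h
    linear_combination h
  -- second difference vanishes
  have quad : ∀ u₁ u₂ v₁ v₂ : ℝ, (α u₁ - α u₂) ⨯₃ (β v₁ - β v₂) = 0 := by
    intro a b c d
    have expand : (α a - α b) ⨯₃ (β c - β d) =
        α a ⨯₃ β c - α a ⨯₃ β d - α b ⨯₃ β c + α b ⨯₃ β d := by
      rw [map_sub crossProduct (α a) (α b), LinearMap.sub_apply,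
        map_sub, map_sub]
      abel
    rw [expand, hsplit a c, hsplit a d, hsplit b c, hsplit b d]
    abel
  -- first differentiation in u
  have step1 : ∀ (u : ℝ) (c d : ℝ), deriv α u ⨯₃ (β c - β d) = 0 := by
    intro u c d
    have L := LinearMap.toContinuousLinearMap
      ((crossProduct (R := ℝ)).flip (β c - β d))
    have hL : ∀ a : Fin 3 → ℝ,
        (LinearMap.toContinuousLinearMap
          ((crossProduct (R := ℝ)).flip (β c - β d))) a = a ⨯₃ (β c - β d) :=
      fun a => rfl
    have hconst : ∀ u₁ u₂ : ℝ,
        (LinearMap.toContinuousLinearMap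
          ((crossProduct (R := ℝ)).flip (β c - β d))) (α u₁)
        = (LinearMap.toContinuousLinearMap
          ((crossProduct (R := ℝ)).flip (β c - β d))) (α u₂) := by
      intro u₁ u₂
      rw [hL, hL]
      have h := quad u₁ u₂ c d
      rw [map_sub crossProduct (α u₁) (α u₂), LinearMap.sub_apply,
        sub_eq_zero] at h
      exact h
    have := clm_comp_const_deriv α hdα _ hconst u
    rwa [hL] at this
  -- second differentiation in v
  have step2 : deriv α u₀ ⨯₃ deriv β v₁' = 0 := by
    have hconst : ∀ v₁ v₂ : ℝ,
        (LinearMap.toContinuousLinearMap (crossProduct (deriv α u₀))) (β v₁)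
        = (LinearMap.toContinuousLinearMap (crossProduct (deriv α u₀))) (β v₂) := by
      intro c d
      have h := step1 u₀ c d
      rw [map_sub, sub_eq_zero] at h
      exact h
    have := clm_comp_const_deriv β hdβ _ hconst v₁'
    exact this
  exact hne step2
end

section
/- Every surface of translation x(u,v) = α(u) + β(v) (with x_u, x_v linearly independent and α' ∧ β' ≠ 0 somewhere) admits an infinitesimal bending, given explicitly by ẋ(u,v) = α(u) ∧ β(v) + ∫₀ᵘ α ∧ α' − ∫₀ᵛ β ∧ β'. -/
open Matrix

lemma HasDerivAt.cross3 {f g : ℝ → Fin 3 → ℝ} {f' g' : Fin 3 → ℝ} {t : ℝ}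
    (hf : HasDerivAt f f' t) (hg : HasDerivAt g g' t) :
    HasDerivAt (fun t => f t ⨯₃ g t) (f' ⨯₃ g t + f t ⨯₃ g') t := by
  rw [hasDerivAt_pi] at hf hg ⊢
  intro i
  fin_cases i
  · convert ((hf 1).mul (hg 2)).sub ((hf 2).mul (hg 1)) using 1
    · funext x; simp [cross_apply]
    · simp [cross_apply]; ring
  · convert ((hf 2).mul (hg 0)).sub ((hf 0).mul (hg 2)) using 1
    · funext x; simp [cross_apply]
    · simp [cross_apply]; ring
  · convert ((hf 0).mul (hg 1)).sub ((hf 1).mul (hg 0)) using 1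
    · funext x; simp [cross_apply]
    · simp [cross_apply]; ring

lemma Continuous.cross3 {f g : ℝ → Fin 3 → ℝ} (hf : Continuous f) (hg : Continuous g) :
    Continuous (fun t => f t ⨯₃ g t) := by
  apply continuous_pi
  intro i
  fin_cases i <;> simp only [cross_apply] <;> simp <;> fun_prop

/-- Every surface of translation admits an infinitesimal bending, given by the
universal torsional field `ẋ(u,v) = α(u) ⨯₃ β(v) + ∫₀ᵘ α ⨯₃ α' − ∫₀ᵛ β ⨯₃ β'`:
it is an infinitesimal isometry and not a Euclidean velocity. -/
theorem translation_surface_infinitesimally_flexible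
    (α β : ℝ → Fin 3 → ℝ) (hα : ContDiff ℝ (⊤ : ℕ∞) α) (hβ : ContDiff ℝ (⊤ : ℕ∞) β)
    (hind : ∀ u v : ℝ, LinearIndependent ℝ ![deriv α u, deriv β v])
    (hne : ∃ u v : ℝ, deriv α u ⨯₃ deriv β v ≠ 0)
    (x xdot : ℝ → ℝ → Fin 3 → ℝ)
    (hx : ∀ u v, x u v = α u + β v)
    (hxdot : ∀ u v, xdot u v =
      α u ⨯₃ β v + (∫ s in (0:ℝ)..u, α s ⨯₃ deriv α s)
        - ∫ s in (0:ℝ)..v, β s ⨯₃ deriv β s) :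
    (∀ u v : ℝ,
      (deriv (fun u' => xdot u' v) u) ⬝ᵥ (deriv (fun u' => x u' v) u) = 0 ∧
      (deriv (fun v' => xdot u v') v) ⬝ᵥ (deriv (fun v' => x u v') v) = 0 ∧
      (deriv (fun u' => xdot u' v) u) ⬝ᵥ (deriv (fun v' => x u v') v)
        + (deriv (fun v' => xdot u v') v) ⬝ᵥ (deriv (fun u' => x u' v) u) = 0) ∧
    ¬ ∃ v₀ w₀ : Fin 3 → ℝ, ∀ u v : ℝ, xdot u v = v₀ + w₀ ⨯₃ x u v := by
  have hαd : ∀ u, HasDerivAt α (deriv α u) u :=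
    fun u => (hα.differentiable (by simp) u).hasDerivAt
  have hβd : ∀ v, HasDerivAt β (deriv β v) v :=
    fun v => (hβ.differentiable (by simp) v).hasDerivAt
  have hcα : Continuous fun s => α s ⨯₃ deriv α s :=
    (hα.continuous).cross3 (hα.continuous_deriv (by simp))
  have hcβ : Continuous fun s => β s ⨯₃ deriv β s :=
    (hβ.continuous).cross3 (hβ.continuous_deriv (by simp))
  have hDu : ∀ u v, HasDerivAt (fun u' => xdot u' v)
      (deriv α u ⨯₃ β v + α u ⨯₃ deriv α u) u := by
    intro u v
    have h1 : HasDerivAt (fun u' => α u' ⨯₃ β v) (deriv α u ⨯₃ β v) u := by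
      simpa using (hαd u).cross3 (hasDerivAt_const u (β v))
    have h2 : HasDerivAt (fun u' => ∫ s in (0:ℝ)..u', α s ⨯₃ deriv α s)
        (α u ⨯₃ deriv α u) u := (hcα.integral_hasStrictDerivAt 0 u).hasDerivAt
    have h3 := (h1.add h2).sub_const (∫ s in (0:ℝ)..v, β s ⨯₃ deriv β s)
    have hfun : (fun u' => xdot u' v) = fun u' =>
        (α u' ⨯₃ β v + ∫ s in (0:ℝ)..u', α s ⨯₃ deriv α s)
          - ∫ s in (0:ℝ)..v, β s ⨯₃ deriv β s := by
      funext u'; rw [hxdot, add_sub_assoc]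
    rw [hfun]
    simpa [add_sub_assoc] using h3
  have hDv : ∀ u v, HasDerivAt (fun v' => xdot u v')
      (α u ⨯₃ deriv β v - β v ⨯₃ deriv β v) v := by
    intro u v
    have h1 : HasDerivAt (fun v' => α u ⨯₃ β v') (α u ⨯₃ deriv β v) v := by
      simpa using (hasDerivAt_const v (α u)).cross3 (hβd v)
    have h2 : HasDerivAt (fun v' => ∫ s in (0:ℝ)..v', β s ⨯₃ deriv β s)
        (β v ⨯₃ deriv β v) v := (hcβ.integral_hasStrictDerivAt 0 v).hasDerivAt
    have h3 := ((h1.add_const (∫ s in (0:ℝ)..u, α s ⨯₃ deriv α s)).sub h2)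
    have hfun : (fun v' => xdot u v') = fun v' =>
        (α u ⨯₃ β v' + ∫ s in (0:ℝ)..u, α s ⨯₃ deriv α s)
          - ∫ s in (0:ℝ)..v', β s ⨯₃ deriv β s := by
      funext v'; rw [hxdot]
    rw [hfun]
    exact h3
  have hxu : ∀ u v, HasDerivAt (fun u' => x u' v) (deriv α u) u := by
    intro u v
    have hfun : (fun u' => x u' v) = fun u' => α u' + β v := funext fun u' => hx u' v
    rw [hfun]; exact (hαd u).add_const (β v)
  have hxv : ∀ u v, HasDerivAt (fun v' => x u v') (deriv β v) v := by
    intro u v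
    have hfun : (fun v' => x u v') = fun v' => α u + β v' := funext fun v' => hx u v'
    rw [hfun]; exact (hβd v).const_add (α u)
  constructor
  · intro u v
    rw [(hDu u v).deriv, (hDv u v).deriv, (hxu u v).deriv, (hxv u v).deriv]
    refine ⟨?_, ?_, ?_⟩ <;>
      · simp [cross_apply, dotProduct, Fin.sum_univ_three]; ring
  · rintro ⟨v₀, w₀, h⟩
    obtain ⟨u₀, v₁, hne⟩ := hne
    have key : ∀ u v, α u ⨯₃ deriv β v - β v ⨯₃ deriv β v = w₀ ⨯₃ deriv β v := by
      intro u v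
      have hR : HasDerivAt (fun v' => v₀ + w₀ ⨯₃ x u v') (w₀ ⨯₃ deriv β v) v := by
        have hfun : (fun v' => v₀ + w₀ ⨯₃ x u v') = fun v' => v₀ + w₀ ⨯₃ (α u + β v') := by
          funext v'; rw [hx]
        rw [hfun]
        have h1 : HasDerivAt (fun v' => w₀ ⨯₃ (α u + β v')) (w₀ ⨯₃ deriv β v) v := by
          simpa using (hasDerivAt_const v w₀).cross3 ((hβd v).const_add (α u))
        exact h1.const_add v₀
      have hL := hDv u v
      have hfun : (fun v' => xdot u v') = fun v' => v₀ + w₀ ⨯₃ x u v' :=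
        funext fun v' => h u v'
      rw [hfun] at hL
      exact hL.unique hR
    have hconst : (fun u => α u ⨯₃ deriv β v₁)
        = fun _ => w₀ ⨯₃ deriv β v₁ + β v₁ ⨯₃ deriv β v₁ := by
      funext u
      exact eq_add_of_sub_eq (key u v₁)
    have hd1 : HasDerivAt (fun u => α u ⨯₃ deriv β v₁) (deriv α u₀ ⨯₃ deriv β v₁) u₀ := by
      simpa using (hαd u₀).cross3 (hasDerivAt_const u₀ (deriv β v₁))
    have hd2 : HasDerivAt (fun u => α u ⨯₃ deriv β v₁) 0 u₀ := by
      rw [hconst]; exact hasDerivAt_const _ _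
    exact hne (hd1.unique hd2)
end

section
/- Let α'(u) = (x_α(u), 0, z_α(u)) and β'(v) = (0, y_β(v), z_β(v)) be smooth with x_α never 0 and y_β never 0. Define ẋ_u = (z_α²/x_α, 0, −z_α) and ẋ_v = (0, −z_β²/y_β, z_β). Then ⟨ẋ_u, α'⟩ = 0, ⟨ẋ_v, β'⟩ = 0, and ⟨ẋ_u, β'⟩ + ⟨ẋ_v, α'⟩ = 0, so ẋ(u,v) = ∫₀ᵘ ẋ_u + ∫₀ᵛ ẋ_v is an infinitesimal isometry of x = α + β. -/
open Matrix

/-- For a surface of translation with path in the xz-plane and profile in the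
yz-plane (tangents never in each other's plane), the field with
`ẋ_u = (z_α²/x_α, 0, −z_α)` and `ẋ_v = (0, −z_β²/y_β, z_β)` is an
infinitesimal isometry. -/
theorem perpendicular_planes_infinitesimal_isometry
    (xα zα yβ zβ : ℝ → ℝ)
    (hxα : ContDiff ℝ (⊤ : ℕ∞) xα) (hzα : ContDiff ℝ (⊤ : ℕ∞) zα)
    (hyβ : ContDiff ℝ (⊤ : ℕ∞) yβ) (hzβ : ContDiff ℝ (⊤ : ℕ∞) zβ)
    (hx0 : ∀ u, xα u ≠ 0) (hy0 : ∀ v, yβ v ≠ 0)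
    (α β : ℝ → Fin 3 → ℝ)
    (hα : ∀ u, deriv α u = ![xα u, 0, zα u])
    (hβ : ∀ v, deriv β v = ![0, yβ v, zβ v])
    (xdotu xdotv : ℝ → Fin 3 → ℝ)
    (hu : ∀ u, xdotu u = ![(zα u)^2 / xα u, 0, -zα u])
    (hv : ∀ v, xdotv v = ![0, -(zβ v)^2 / yβ v, zβ v]) :
    ∀ u v : ℝ,
      xdotu u ⬝ᵥ deriv α u = 0 ∧
      xdotv v ⬝ᵥ deriv β v = 0 ∧
      xdotu u ⬝ᵥ deriv β v + xdotv v ⬝ᵥ deriv α u = 0 := by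
  intro u v
  simp only [hα, hβ, hu, hv, dotProduct, Fin.sum_univ_three]
  norm_num [Matrix.cons_val_two]
  refine ⟨?_, ?_, by ring⟩
  · rw [div_mul_cancel₀ _ (hx0 u)]; ring
  · rw [div_mul_cancel₀ _ (hy0 v)]; ring
end

section
/- With α' = (x_α, 0, z_α), β' = (0, y_β, z_β), x_α ≠ 0, y_β ≠ 0 everywhere, suppose ẋ with ẋ_u = (z_α²/x_α, 0, −z_α), ẋ_v = (0, −z_β²/y_β, z_β) is a Euclidean velocity of x = α + β, i.e., ẋ_u = w ∧ α' and ẋ_v = w ∧ β' for a constant w ∈ ℝ³. Then z_α/x_α and z_β/y_β are constant, hence α and β are straight lines. -/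
open Matrix

/-- If the field with `ẋ_u = (z_α²/x_α, 0, −z_α)`, `ẋ_v = (0, −z_β²/y_β, z_β)`
is a Euclidean velocity, i.e. `ẋ_u = w ∧ α'` and `ẋ_v = w ∧ β'` for a constant
`w`, then `z_α/x_α` and `z_β/y_β` are constant (so `α` and `β` are straight). -/
theorem perpendicular_planes_euclidean_velocity_implies_straight
    (xα zα yβ zβ : ℝ → ℝ)
    (hx0 : ∀ u, xα u ≠ 0) (hy0 : ∀ v, yβ v ≠ 0)
    (w : Fin 3 → ℝ)
    (hu : ∀ u : ℝ, ![(zα u)^2 / xα u, 0, -zα u] = w ⨯₃ ![xα u, 0, zα u])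
    (hv : ∀ v : ℝ, ![0, -(zβ v)^2 / yβ v, zβ v] = w ⨯₃ ![0, yβ v, zβ v]) :
    (∃ kα : ℝ, ∀ u : ℝ, zα u / xα u = kα) ∧
    (∃ kβ : ℝ, ∀ v : ℝ, zβ v / yβ v = kβ) := by
  constructor
  · refine ⟨w 1, fun u => ?_⟩
    have h := congrFun (hu u) 2
    simp [crossProduct] at h
    rw [div_eq_iff (hx0 u)]
    linarith
  · refine ⟨w 0, fun v => ?_⟩
    have h := congrFun (hv v) 2
    simp [crossProduct] at h
    rw [div_eq_iff (hy0 v)]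
    linarith
end

section
/- If ẋ is an infinitesimal bending of a surface x : Ω → ℝ³ and A is an invertible 3×3 real matrix, then A⁻ᵀ ẋ (the inverse transpose of A applied pointwise to ẋ) is an infinitesimal bending of the surface A x. -/
open Matrix

/-- The dot products of partial derivatives defining an infinitesimal isometry. -/
def IsInfinitesimalIsometry (x xdot : ℝ → ℝ → Fin 3 → ℝ) : Prop :=
  ∀ u v : ℝ,
    (deriv (fun u' => xdot u' v) u) ⬝ᵥ (deriv (fun u' => x u' v) u) = 0 ∧
    (deriv (fun v' => xdot u v') v) ⬝ᵥ (deriv (fun v' => x u v') v) = 0 ∧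
    (deriv (fun u' => xdot u' v) u) ⬝ᵥ (deriv (fun v' => x u v') v)
      + (deriv (fun v' => xdot u v') v) ⬝ᵥ (deriv (fun u' => x u' v) u) = 0

/-- A Euclidean velocity of a surface `x`. -/
def IsEuclideanVelocity (x xdot : ℝ → ℝ → Fin 3 → ℝ) : Prop :=
  ∃ v₀ w₀ : Fin 3 → ℝ, ∀ u v : ℝ, xdot u v = v₀ + w₀ ⨯₃ x u v

/-- An infinitesimal bending: an infinitesimal isometry that is not a Euclidean
velocity. -/
def IsInfinitesimalBending (x xdot : ℝ → ℝ → Fin 3 → ℝ) : Prop :=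
  IsInfinitesimalIsometry x xdot ∧ ¬ IsEuclideanVelocity x xdot

private lemma deriv_mulVec_comp (A : Matrix (Fin 3) (Fin 3) ℝ) (f : ℝ → Fin 3 → ℝ) (u : ℝ)
    (hf : DifferentiableAt ℝ f u) :
    deriv (fun t => A.mulVec (f t)) u = A.mulVec (deriv f u) :=
  ((A.mulVecLin.toContinuousLinearMap.hasFDerivAt).comp_hasDerivAt u hf.hasDerivAt).deriv

private lemma dot_invT (A : Matrix (Fin 3) (Fin 3) ℝ) (hA : IsUnit A.det) (a b : Fin 3 → ℝ) :
    ((Aᵀ)⁻¹.mulVec a) ⬝ᵥ (A.mulVec b) = a ⬝ᵥ b := by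
  rw [Matrix.dotProduct_mulVec, ← Matrix.mulVec_transpose, Matrix.mulVec_mulVec,
    Matrix.mul_nonsing_inv _ (by simpa using hA), Matrix.one_mulVec]

private lemma cross_mulVec (M : Matrix (Fin 3) (Fin 3) ℝ) (a b : Fin 3 → ℝ) :
    Mᵀ.mulVec ((M.mulVec a) ⨯₃ (M.mulVec b)) = M.det • (a ⨯₃ b) := by
  funext i
  fin_cases i <;>
    simp [crossProduct, mulVec, dotProduct, Matrix.det_fin_three, Fin.sum_univ_three,
      Matrix.transpose] <;> ring

/-- Infinitesimal flexibility is a linear invariant: if `ẋ` is an infinitesimal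
bending of `x` and `A` is invertible, then `A⁻ᵀ ẋ` is an infinitesimal bending
of `A x`. -/
theorem infinitesimal_bending_linear_invariant
    (x xdot : ℝ → ℝ → Fin 3 → ℝ)
    (hx1 : ∀ v, Differentiable ℝ (fun u => x u v))
    (hx2 : ∀ u, Differentiable ℝ (fun v => x u v))
    (hd1 : ∀ v, Differentiable ℝ (fun u => xdot u v))
    (hd2 : ∀ u, Differentiable ℝ (fun v => xdot u v))
    (A : Matrix (Fin 3) (Fin 3) ℝ) (hA : IsUnit A.det)
    (h : IsInfinitesimalBending x xdot) :
    IsInfinitesimalBending (fun u v => A.mulVec (x u v))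
      (fun u v => (Aᵀ)⁻¹.mulVec (xdot u v)) := by
  obtain ⟨hiso, hnev⟩ := h
  have hAT : IsUnit (Aᵀ).det := by simpa using hA
  constructor
  · intro u v
    obtain ⟨h1, h2, h3⟩ := hiso u v
    rw [deriv_mulVec_comp A (fun u' => x u' v) u ((hx1 v u)),
      deriv_mulVec_comp A (fun v' => x u v') v ((hx2 u v)),
      deriv_mulVec_comp (Aᵀ)⁻¹ (fun u' => xdot u' v) u ((hd1 v u)),
      deriv_mulVec_comp (Aᵀ)⁻¹ (fun v' => xdot u v') v ((hd2 u v)),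
      dot_invT A hA, dot_invT A hA, dot_invT A hA, dot_invT A hA]
    exact ⟨h1, h2, h3⟩
  · intro ⟨v₀, w₀, hev⟩
    apply hnev
    refine ⟨Aᵀ.mulVec v₀, A.det • (A⁻¹.mulVec w₀), fun u v => ?_⟩
    have hx0 : xdot u v = Aᵀ.mulVec ((Aᵀ)⁻¹.mulVec (xdot u v)) := by
      rw [Matrix.mulVec_mulVec, Matrix.mul_nonsing_inv _ hAT, Matrix.one_mulVec]
    have hw : A.mulVec (A⁻¹.mulVec w₀) = w₀ := by
      rw [Matrix.mulVec_mulVec, Matrix.mul_nonsing_inv _ hA, Matrix.one_mulVec]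
    simp only at hev
    rw [hx0, hev u v, Matrix.mulVec_add, ← hw, cross_mulVec, hw, _root_.map_smul, LinearMap.smul_apply]
end

section
/- Let β₁(t), β₂(t) be unit vectors with ⟨β₁(t), β₂(t)⟩ = t, let c₁, c₂ ∈ (−1,1) be constants with s_i = √(1−c_i²), and suppose c₁c₂ − s₁s₂ < t < c₁c₂ + s₁s₂. Define a(t) = c₁β₂(t) − c₂β₁(t), b(t) = β₁(t) ∧ β₂(t), J(t) = σ√(|b(t)|² − |a(t)|²) with σ ∈ {±1}, and y_u(t) = (a(t) ∧ b(t) + J(t) b(t))/|b(t)|². Then |y_u(t)| = 1, ⟨y_u(t), β₁(t)⟩ = c₁, and ⟨y_u(t), β₂(t)⟩ = c₂. -/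
open Matrix

private lemma cross_sq' (u v : Fin 3 → ℝ) :
    (u ⨯₃ v) ⬝ᵥ (u ⨯₃ v) = (u ⬝ᵥ u) * (v ⬝ᵥ v) - (u ⬝ᵥ v)^2 := by
  simp [crossProduct, dotProduct, Fin.sum_univ_three]; ring

private lemma cross_dot_left' (u v : Fin 3 → ℝ) : (u ⨯₃ v) ⬝ᵥ u = 0 := by
  simp [crossProduct, dotProduct, Fin.sum_univ_three]; ring

private lemma cross_dot_right' (u v : Fin 3 → ℝ) : (u ⨯₃ v) ⬝ᵥ v = 0 := by
  simp [crossProduct, dotProduct, Fin.sum_univ_three]; ring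

private lemma triple' (a u v w : Fin 3 → ℝ) :
    (a ⨯₃ (u ⨯₃ v)) ⬝ᵥ w = (a ⬝ᵥ v) * (u ⬝ᵥ w) - (a ⬝ᵥ u) * (v ⬝ᵥ w) := by
  simp [crossProduct, dotProduct, Fin.sum_univ_three]; ring

private lemma expand_self' (X B : Fin 3 → ℝ) (r j : ℝ) :
    (r • (X + j • B)) ⬝ᵥ (r • (X + j • B)) =
      r * r * (X ⬝ᵥ X + j * (X ⬝ᵥ B) + j * (B ⬝ᵥ X) + j * j * (B ⬝ᵥ B)) := by
  simp [dotProduct, Fin.sum_univ_three, Pi.add_apply, Pi.smul_apply, smul_eq_mul]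
  ring

private lemma expand_dot' (X B w : Fin 3 → ℝ) (r j : ℝ) :
    (r • (X + j • B)) ⬝ᵥ w = r * (X ⬝ᵥ w + j * (B ⬝ᵥ w)) := by
  simp [dotProduct, Fin.sum_univ_three, Pi.add_apply, Pi.smul_apply, smul_eq_mul]
  ring

private lemma sub_smul_dot' (u v w : Fin 3 → ℝ) (c d : ℝ) :
    (c • u - d • v) ⬝ᵥ w = c * (u ⬝ᵥ w) - d * (v ⬝ᵥ w) := by
  simp [dotProduct, Fin.sum_univ_three, Pi.sub_apply, Pi.smul_apply, smul_eq_mul]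
  ring

/-- Reconstruction of the path tangent in the two-slope bending: the vector
`y_u(t) = (a(t) ⨯₃ b(t) + J(t) b(t))/|b(t)|²` is a unit vector keeping fixed
angles with the two slopes `β₁(t)`, `β₂(t)`. -/
theorem two_slope_bending_tangent_reconstruction
    (t : ℝ) (β₁ β₂ : Fin 3 → ℝ)
    (hβ₁ : β₁ ⬝ᵥ β₁ = 1) (hβ₂ : β₂ ⬝ᵥ β₂ = 1) (hβ₁₂ : β₁ ⬝ᵥ β₂ = t)
    (c₁ c₂ s₁ s₂ : ℝ)
    (hc₁ : -1 < c₁ ∧ c₁ < 1) (hc₂ : -1 < c₂ ∧ c₂ < 1)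
    (hs₁ : s₁ = Real.sqrt (1 - c₁^2)) (hs₂ : s₂ = Real.sqrt (1 - c₂^2))
    (ht : c₁ * c₂ - s₁ * s₂ < t ∧ t < c₁ * c₂ + s₁ * s₂)
    (σ : ℝ) (hσ : σ = 1 ∨ σ = -1)
    (a b : Fin 3 → ℝ) (J : ℝ) (yu : Fin 3 → ℝ)
    (ha : a = c₁ • β₂ - c₂ • β₁) (hb : b = β₁ ⨯₃ β₂)
    (hJ : J = σ * Real.sqrt (b ⬝ᵥ b - a ⬝ᵥ a))
    (hyu : yu = (b ⬝ᵥ b)⁻¹ • (a ⨯₃ b + J • b)) :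
    yu ⬝ᵥ yu = 1 ∧ yu ⬝ᵥ β₁ = c₁ ∧ yu ⬝ᵥ β₂ = c₂ := by
  have hβ₂₁ : β₂ ⬝ᵥ β₁ = t := by rw [dotProduct_comm]; exact hβ₁₂
  have hBB : b ⬝ᵥ b = 1 - t^2 := by
    rw [hb, cross_sq', hβ₁, hβ₂, hβ₁₂]; ring
  have haβ₁ : a ⬝ᵥ β₁ = c₁ * t - c₂ := by
    rw [ha, sub_smul_dot', hβ₂₁, hβ₁]; ring
  have haβ₂ : a ⬝ᵥ β₂ = c₁ - c₂ * t := by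
    rw [ha, sub_smul_dot', hβ₂, hβ₁₂]; ring
  have haa : a ⬝ᵥ a = c₁^2 + c₂^2 - 2*c₁*c₂*t :=
    calc a ⬝ᵥ a = (c₁ • β₂ - c₂ • β₁) ⬝ᵥ a := by rw [← ha]
    _ = c₁ * (β₂ ⬝ᵥ a) - c₂ * (β₁ ⬝ᵥ a) := sub_smul_dot' _ _ _ _ _
    _ = c₁ * (a ⬝ᵥ β₂) - c₂ * (a ⬝ᵥ β₁) := by rw [dotProduct_comm β₂, dotProduct_comm β₁]
    _ = c₁^2 + c₂^2 - 2*c₁*c₂*t := by rw [haβ₁, haβ₂]; ring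
  have hab : a ⬝ᵥ b = 0 := by
    rw [ha, sub_smul_dot', dotProduct_comm β₂, dotProduct_comm β₁, hb,
      cross_dot_left', cross_dot_right']
    ring
  have hs₁sq : s₁^2 = 1 - c₁^2 := by
    rw [hs₁, Real.sq_sqrt]; nlinarith [hc₁.1, hc₁.2]
  have hs₂sq : s₂^2 = 1 - c₂^2 := by
    rw [hs₂, Real.sq_sqrt]; nlinarith [hc₂.1, hc₂.2]
  have hDpos : 0 < b ⬝ᵥ b - a ⬝ᵥ a := by
    have : b ⬝ᵥ b - a ⬝ᵥ a = s₁^2 * s₂^2 - (t - c₁*c₂)^2 := by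
      rw [hBB, haa, hs₁sq, hs₂sq]; ring
    rw [this]
    nlinarith [ht.1, ht.2]
  have haa_nonneg : 0 ≤ a ⬝ᵥ a := by
    simp only [dotProduct, Fin.sum_univ_three]
    nlinarith [mul_self_nonneg (a 0), mul_self_nonneg (a 1), mul_self_nonneg (a 2)]
  have hBpos : 0 < b ⬝ᵥ b := by linarith
  have h1t : (1 : ℝ) - t^2 ≠ 0 := by rw [← hBB]; exact ne_of_gt hBpos
  have hJ2 : J^2 = b ⬝ᵥ b - a ⬝ᵥ a := by
    rw [hJ, mul_pow, Real.sq_sqrt hDpos.le]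
    rcases hσ with h | h <;> rw [h] <;> ring
  have hxb1 : (a ⨯₃ b) ⬝ᵥ β₁ = c₁ * (1 - t^2) := by
    rw [hb, triple', haβ₂, haβ₁, hβ₁, hβ₂₁]; ring
  have hxb2 : (a ⨯₃ b) ⬝ᵥ β₂ = c₂ * (1 - t^2) := by
    rw [hb, triple', haβ₂, haβ₁, hβ₁₂, hβ₂]; ring
  have hbβ₁ : b ⬝ᵥ β₁ = 0 := by rw [hb]; exact cross_dot_left' _ _
  have hbβ₂ : b ⬝ᵥ β₂ = 0 := by rw [hb]; exact cross_dot_right' _ _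
  have hxx : (a ⨯₃ b) ⬝ᵥ (a ⨯₃ b) = (a ⬝ᵥ a) * (b ⬝ᵥ b) := by
    rw [cross_sq', hab]; ring
  have hxbb : (a ⨯₃ b) ⬝ᵥ b = 0 := cross_dot_right' _ _
  have hbxb : b ⬝ᵥ (a ⨯₃ b) = 0 := by rw [dotProduct_comm]; exact hxbb
  refine ⟨?_, ?_, ?_⟩
  · rw [hyu, expand_self', hxx, hxbb, hbxb, hBB, show J*J = J^2 from (sq J).symm, hJ2, hBB]
    field_simp
    ring
  · rw [hyu, expand_dot', hxb1, hbβ₁, hBB]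
    field_simp
    ring
  · rw [hyu, expand_dot', hxb2, hbβ₂, hBB]
    field_simp
    ring
end

section
/- Let x = α + β be a smooth surface of translation and suppose ẋ is an infinitesimal isometry with rotation field w, i.e., ẋ_u = w ∧ x_u and ẋ_v = w ∧ x_v for a smooth field w(u,v). If ẋ_{uv} = w ∧ x_{uv} (i.e., the deformed surface remains a surface of translation to first order), then w_u ∧ x_v = 0 and w_v ∧ x_u = 0; hence there exist scalar functions a, b with w_u(u,v) = a(u,v) β'(v) and w_v(u,v) = b(u,v) α'(u). -/
open Matrix

private lemma cross_parallel (y c : Fin 3 → ℝ) (hc : c ≠ 0) (h : y ⨯₃ c = 0) :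
    ∃ a : ℝ, y = a • c := by
  have h0 := congrFun h 0
  have h1 := congrFun h 1
  have h2 := congrFun h 2
  simp [crossProduct, sub_eq_zero] at h0 h1 h2
  obtain ⟨i, hi⟩ := Function.ne_iff.mp hc
  rw [Pi.zero_apply] at hi
  have key : ∀ j k : Fin 3, y j * c k = y k * c j := by
    intro j k
    fin_cases j <;> fin_cases k <;>
      simp_all <;> linarith
  refine ⟨y i / c i, funext fun j => ?_⟩
  simp only [Pi.smul_apply, smul_eq_mul]
  field_simp
  linarith [key j i]

private lemma deriv_fst (f : ℝ × ℝ → Fin 3 → ℝ) (hf : ContDiff ℝ (⊤ : ℕ∞) f) (u v : ℝ) :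
    deriv (fun u' => f (u', v)) u = fderiv ℝ f (u, v) (1, 0) := by
  have h1 : HasDerivAt (fun u' : ℝ => (u', v)) ((1 : ℝ), (0 : ℝ)) u :=
    (hasDerivAt_id u).prodMk (hasDerivAt_const u v)
  have h2 : HasFDerivAt f (fderiv ℝ f (u, v)) (u, v) :=
    (hf.differentiable (by simp) (u, v)).hasFDerivAt
  exact (h2.comp_hasDerivAt u h1).deriv

private lemma deriv_snd (f : ℝ × ℝ → Fin 3 → ℝ) (hf : ContDiff ℝ (⊤ : ℕ∞) f) (u v : ℝ) :
    deriv (fun v' => f (u, v')) v = fderiv ℝ f (u, v) (0, 1) := by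
  have h1 : HasDerivAt (fun v' : ℝ => (u, v')) ((0 : ℝ), (1 : ℝ)) v :=
    (hasDerivAt_const v u).prodMk (hasDerivAt_id v)
  have h2 : HasFDerivAt f (fderiv ℝ f (u, v)) (u, v) :=
    (hf.differentiable (by simp) (u, v)).hasFDerivAt
  exact (h2.comp_hasDerivAt v h1).deriv

private lemma cross_deriv (g : ℝ → Fin 3 → ℝ) (c : Fin 3 → ℝ) (hg : DifferentiableAt ℝ g t) :
    deriv (fun s => g s ⨯₃ c) t = deriv g t ⨯₃ c := by
  let L : (Fin 3 → ℝ) →L[ℝ] (Fin 3 → ℝ) :=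
    LinearMap.toContinuousLinearMap ((crossProduct : (Fin 3 → ℝ) →ₗ[ℝ] _).flip c)
  have hL : ∀ z, L z = z ⨯₃ c := fun z => rfl
  have := (L.hasFDerivAt.comp_hasDerivAt t hg.hasDerivAt).deriv
  simpa [hL, Function.comp_def] using this

/-- If an infinitesimal isometry of a surface of translation, with rotation
field `w`, preserves conjugacy (`ẋ_{uv} = w ⨯₃ x_{uv} = 0`), then
`w_u ⨯₃ x_v = 0` and `w_v ⨯₃ x_u = 0`; hence `w_u` is parallel to `β'` and
`w_v` is parallel to `α'`, i.e. `w` lies on a doubly ruled surface. -/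
theorem conjugacy_preserving_rotation_field_doubly_ruled
    (α β : ℝ → Fin 3 → ℝ) (hα : ContDiff ℝ (⊤ : ℕ∞) α) (hβ : ContDiff ℝ (⊤ : ℕ∞) β)
    (hind : ∀ u v : ℝ, LinearIndependent ℝ ![deriv α u, deriv β v])
    (x xdot w : ℝ → ℝ → Fin 3 → ℝ)
    (hx : ∀ u v, x u v = α u + β v)
    (hxdots : ContDiff ℝ (⊤ : ℕ∞) (fun p : ℝ × ℝ => xdot p.1 p.2))
    (hws : ContDiff ℝ (⊤ : ℕ∞) (fun p : ℝ × ℝ => w p.1 p.2))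
    (hwu : ∀ u v : ℝ, deriv (fun u' => xdot u' v) u = w u v ⨯₃ deriv (fun u' => x u' v) u)
    (hwv : ∀ u v : ℝ, deriv (fun v' => xdot u v') v = w u v ⨯₃ deriv (fun v' => x u v') v)
    (hconj : ∀ u v : ℝ,
      deriv (fun v' => deriv (fun u' => xdot u' v') u) v
        = w u v ⨯₃ deriv (fun v' => deriv (fun u' => x u' v') u) v) :
    (∀ u v : ℝ, deriv (fun u' => w u' v) u ⨯₃ deriv β v = 0) ∧
    (∀ u v : ℝ, deriv (fun v' => w u v') v ⨯₃ deriv α u = 0) ∧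
    ∃ a b : ℝ → ℝ → ℝ, ∀ u v : ℝ,
      deriv (fun u' => w u' v) u = a u v • deriv β v ∧
      deriv (fun v' => w u v') v = b u v • deriv α u := by
  set F : ℝ × ℝ → Fin 3 → ℝ := fun p => xdot p.1 p.2 with hF
  -- partial derivatives of x
  have hxu : ∀ u v : ℝ, deriv (fun u' => x u' v) u = deriv α u := by
    intro u v
    have : (fun u' => x u' v) = fun u' => α u' + β v := funext fun u' => hx u' v
    rw [this, deriv_add_const]
  have hxv : ∀ u v : ℝ, deriv (fun v' => x u v') v = deriv β v := by
    intro u v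
    have : (fun v' => x u v') = fun v' => α u + β v' := funext fun v' => hx u v'
    rw [this, deriv_const_add]
  have hxuv : ∀ u v : ℝ, deriv (fun v' => deriv (fun u' => x u' v') u) v = 0 := by
    intro u v
    have : (fun v' => deriv (fun u' => x u' v') u) = fun _ => deriv α u :=
      funext fun v' => hxu u v'
    rw [this, deriv_const]
  -- hence the conjugacy condition says the mixed partial of xdot vanishes
  have hmix0 : ∀ u v : ℝ, deriv (fun v' => deriv (fun u' => xdot u' v') u) v = 0 := by
    intro u v
    rw [hconj u v, hxuv u v]
    exact map_zero _
  -- differentiability of slices of w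
  have hw1 : ∀ v u : ℝ, DifferentiableAt ℝ (fun u' => w u' v) u := by
    intro v u
    have : (fun u' => w u' v) = (fun p : ℝ × ℝ => w p.1 p.2) ∘ fun u' => (u', v) := rfl
    rw [this]
    exact ((hws.differentiable (by simp)) _).comp u (differentiableAt_id.prodMk (differentiableAt_const v))
  have hw2 : ∀ u v : ℝ, DifferentiableAt ℝ (fun v' => w u v') v := by
    intro u v
    have : (fun v' => w u v') = (fun p : ℝ × ℝ => w p.1 p.2) ∘ fun v' => (u, v') := rfl
    rw [this]
    exact ((hws.differentiable (by simp)) _).comp v ((differentiableAt_const u).prodMk differentiableAt_id)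
  -- Claim 2 : w_v ⨯₃ α' = 0
  have claim2 : ∀ u v : ℝ, deriv (fun v' => w u v') v ⨯₃ deriv α u = 0 := by
    intro u v
    have hfun : (fun v' => deriv (fun u' => xdot u' v') u)
        = fun v' => (fun v'' => w u v'') v' ⨯₃ deriv α u := by
      funext v'
      rw [hwu u v', hxu u v']
    have := hmix0 u v
    rw [hfun] at this
    rw [← cross_deriv (fun v' => w u v') (deriv α u) (hw2 u v)]
    exact this
  -- mixed partials of F, symmetric
  have hFsymm : ∀ u v : ℝ,
      fderiv ℝ (fderiv ℝ F) (u, v) (1, 0) (0, 1) = fderiv ℝ (fderiv ℝ F) (u, v) (0, 1) (1, 0) :=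
    fun u v => (hxdots.contDiffAt.isSymmSndFDerivAt (by norm_num; exact WithTop.coe_le_coe.mpr le_top)) _ _
  have hFd : ContDiff ℝ (⊤ : ℕ∞) (fderiv ℝ F) := hxdots.fderiv_right (by simp)
  -- express both mixed partials in terms of fderiv²
  have hG : ∀ c : ℝ × ℝ, ContDiff ℝ (⊤ : ℕ∞) (fun p => fderiv ℝ F p c) :=
    fun c => hFd.clm_apply contDiff_const
  have hmixed : ∀ u v : ℝ,
      deriv (fun v' => deriv (fun u' => xdot u' v') u) v
        = fderiv ℝ (fderiv ℝ F) (u, v) (0, 1) (1, 0) := by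
    intro u v
    have e1 : (fun v' => deriv (fun u' => xdot u' v') u)
        = fun v' => fderiv ℝ F (u, v') (1, 0) := by
      funext v'
      exact deriv_fst F hxdots u v'
    rw [e1, deriv_snd (fun p => fderiv ℝ F p (1, 0) : ℝ × ℝ → Fin 3 → ℝ) ?_ u v]
    · rw [fderiv_clm_apply ((hFd.differentiable (by simp)) (u, v))
        (differentiableAt_const _)]
      simp
    · exact hG (1, 0)
  have hmixed' : ∀ u v : ℝ,
      deriv (fun u' => deriv (fun v' => xdot u' v') v) u
        = fderiv ℝ (fderiv ℝ F) (u, v) (1, 0) (0, 1) := by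
    intro u v
    have e1 : (fun u' => deriv (fun v' => xdot u' v') v)
        = fun u' => fderiv ℝ F (u', v) (0, 1) := by
      funext u'
      exact deriv_snd F hxdots u' v
    rw [e1, deriv_fst (fun p => fderiv ℝ F p (0, 1) : ℝ × ℝ → Fin 3 → ℝ) (hG (0, 1)) u v]
    rw [fderiv_clm_apply ((hFd.differentiable (by simp)) (u, v))
      (differentiableAt_const _)]
    simp
  -- Claim 1 : w_u ⨯₃ β' = 0
  have claim1 : ∀ u v : ℝ, deriv (fun u' => w u' v) u ⨯₃ deriv β v = 0 := by
    intro u v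
    have hfun : (fun u' => deriv (fun v' => xdot u' v') v)
        = fun u' => (fun u'' => w u'' v) u' ⨯₃ deriv β v := by
      funext u'
      rw [hwv u' v, hxv u' v]
    have h0 : deriv (fun u' => deriv (fun v' => xdot u' v') v) u = 0 := by
      rw [hmixed' u v, hFsymm u v, ← hmixed u v, hmix0 u v]
    rw [hfun] at h0
    rw [← cross_deriv (fun u' => w u' v) (deriv β v) (hw1 v u)]
    exact h0
  refine ⟨claim1, claim2, ?_⟩
  have hβne : ∀ u v : ℝ, deriv β v ≠ 0 := fun u v => by
    have := (hind u v).ne_zero 1; simpa using this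
  have hαne : ∀ u v : ℝ, deriv α u ≠ 0 := fun u v => by
    have := (hind u v).ne_zero 0; simpa using this
  have h1 : ∀ u v : ℝ, ∃ a : ℝ, deriv (fun u' => w u' v) u = a • deriv β v :=
    fun u v => cross_parallel _ _ (hβne u v) (claim1 u v)
  have h2 : ∀ u v : ℝ, ∃ b : ℝ, deriv (fun v' => w u v') v = b • deriv α u :=
    fun u v => cross_parallel _ _ (hαne u v) (claim2 u v)
  choose a ha using h1
  choose b hb using h2
  exact ⟨a, b, fun u v => ⟨ha u v, hb u v⟩⟩
end
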